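/- arXiv:2304.05665 — 3 statements merged into one kernel-verified Lean document; each statement's English description precedes it below -/
import Mathlib

section
/- With the earliest-departure recursion π_1 = t_1 - δ, π_i = max(π_{i-1} + τ_{i-1,i}, t_i - δ), the duty p is feasible (i.e., there exist departure times s_i ∈ [t_i - δ, t_i + δ] with s_{i+1} ≥ s_i + τ_{i,i+1} for all i) if and only if π_i ≤ t_i + δ for every i. -/
/-- Earliest-departure recursion. -/
def piRec (t τ : ℕ → ℤ) (δ : ℤ) : ℕ → ℤ
  | 0 => t 0 - δ
  | i + 1 => max (piRec t τ δ i + τ i) (t (i + 1) - δ)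

/-- the duty on trips `0..n` is feasible iff `piRec i ≤ t i + δ`
for every trip `i`. -/
theorem feasible_iff_piRec_le (t τ : ℕ → ℤ) (δ : ℤ) (hδ : 0 ≤ δ) (n : ℕ) :
    (∃ s : ℕ → ℤ,
      (∀ i ≤ n, t i - δ ≤ s i ∧ s i ≤ t i + δ) ∧
      (∀ i < n, s i + τ i ≤ s (i + 1))) ↔
    (∀ i ≤ n, piRec t τ δ i ≤ t i + δ) := by
  constructor
  · rintro ⟨s, hwin, hgap⟩ i hi
    have key : ∀ i ≤ n, piRec t τ δ i ≤ s i := by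
      intro i
      induction i with
      | zero => intro _; exact (hwin 0 (Nat.zero_le _)).1
      | succ k ih =>
        intro hk
        have hk' : k ≤ n := Nat.le_of_succ_le hk
        have h1 : piRec t τ δ k + τ k ≤ s (k + 1) :=
          le_trans (add_le_add_left (ih hk') _) (hgap k hk)
        have h2 : t (k + 1) - δ ≤ s (k + 1) := (hwin (k + 1) hk).1
        exact max_le h1 h2
    exact le_trans (key i hi) (hwin i hi).2
  · intro h
    refine ⟨piRec t τ δ, fun i hi => ⟨?_, h i hi⟩, fun i hi => ?_⟩
    · cases i with
      | zero => simp [piRec]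
      | succ k => exact le_max_right _ _
    · exact le_max_left _ _
end

section
/- Consider two chains of trips A = (a_1, a_2, a_3) and B = (b_1, b_2, b_3) where crossing connections are possible in the relaxed network. It can happen that the decompositions {(a_1,a_2,a_3), (b_1,b_2,b_3)} and {(a_1,a_2,b_3), (b_1,b_2,a_3)} cover the same trips with the same arcs, yet one decomposition consists entirely of implementable duties while the other contains a non-implementable duty. Concretely, with δ = 1, gaps τ = 2 between consecutive trips, and timetabled start times t_{a_1}=0, t_{b_1}=1, t_{a_2}=2, t_{b_2}=3, t_{a_3}=4, t_{b_3}=6: the sequences (a_1,a_2,a_3), (a_1,a_2,b_3), (b_1,b_2,b_3) are implementable but (b_1,b_2,a_3) is not. -/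
/-- A three-trip sequence with timetabled start times `t1, t2, t3`, maximum
shift `δ` and minimum gap `g` between consecutive departures is
implementable if departure times within the windows exist respecting the gaps. -/
def Impl3 (t1 t2 t3 δ g : ℤ) : Prop :=
  ∃ s1 s2 s3 : ℤ,
    t1 - δ ≤ s1 ∧ s1 ≤ t1 + δ ∧
    t2 - δ ≤ s2 ∧ s2 ≤ t2 + δ ∧
    t3 - δ ≤ s3 ∧ s3 ≤ t3 + δ ∧
    s1 + g ≤ s2 ∧ s2 + g ≤ s3

/-- the choice of duty decomposition can determine
feasibility. With `δ = 1`, gap `3`, timetabled times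
`t_{a1}=0, t_{a2}=2, t_{a3}=4, t_{b1}=1, t_{b2}=3, t_{b3}=6`:
the sequences `(a1,a2,a3)`, `(a1,a2,b3)` and `(b1,b2,b3)` are
implementable, but `(b1,b2,a3)` is not. Hence the decomposition
`{(a1,a2,a3),(b1,b2,b3)}` is feasible while `{(a1,a2,b3),(b1,b2,a3)}`,
covering the same trips, is not. -/
theorem duty_decomposition_matters :
    Impl3 0 2 4 1 3 ∧ Impl3 0 2 6 1 3 ∧ Impl3 1 3 6 1 3 ∧ ¬ Impl3 1 3 4 1 3 := by
  refine ⟨⟨-1, 2, 5, by norm_num⟩, ⟨-1, 2, 5, by norm_num⟩, ⟨0, 3, 6, by norm_num⟩, ?_⟩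
  rintro ⟨s1, s2, s3, h1, h2, h3, h4, h5, h6, h7, h8⟩
  omega
end

section
/- If every arc ((l,t),(k,t')) of the partially time-expanded network satisfies t' ≤ t + τ_{lk} (no arc overestimates travel time), then for every path in the partial network visiting nodes (l_0,s_0),...,(l_n,s_n), the node times underestimate true cumulative travel: s_j ≤ s_0 + Σ_{i=1}^{j} τ_{l_{i-1} l_i} for all j. -/
/-- if every arc of a path in the partially time-expanded
network is "short" (its head time is at most its tail time plus the true
travel time `τ`), then the node times along the path underestimate true
cumulative travel: `s j ≤ s 0 + Σ_{i<j} τ (l i) (l (i+1))`. -/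
theorem short_arc_path_underestimates {L : Type*} (τ : L → L → ℤ)
    (hτ : ∀ a b, 0 ≤ τ a b)
    (n : ℕ) (l : ℕ → L) (s : ℕ → ℤ)
    (harc : ∀ i < n, s (i + 1) ≤ s i + τ (l i) (l (i + 1))) :
    ∀ j ≤ n, s j ≤ s 0 + ∑ i ∈ Finset.range j, τ (l i) (l (i + 1)) := by
  intro j hj
  induction j with
  | zero => simp
  | succ k ih =>
    have hk : k ≤ n := Nat.le_of_succ_le hj
    have := harc k (Nat.lt_of_succ_le hj)
    rw [Finset.sum_range_succ]
    have := ih hk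
    omega
end
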